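/- arXiv:2103.08471 — 3 statements merged into one kernel-verified Lean document; each statement's English description precedes it below -/
import Mathlib

section
/- Over R = ℚ[x, y], let F = R⁴ with the square-zero differential given by the strictly upper-triangular matrix ∂_F with rows [0, -y, -x, -1], [0,0,0,-x], [0,0,0,y], [0,0,0,0], and let D = R² with differential ∂_D = [[xy, -x²], [y², -xy]]. Conjugating ∂_F by the invertible matrix A with rows [-1,0,0,0], [x,-1,0,0], [y,0,1,0], [0,-y,-x,-1] yields the block matrix [[0,0,0,-1],[0,xy,-x²,0],[0,y²,-xy,0],[0,0,0,0]]; consequently (F, ∂_F) is isomorphic as a differential module to the direct sum of (D, ∂_D) and a contractible differential module of rank 2. -/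
/-!
All claims are polynomial identities in `x, y`, so they hold over any commutative ring. The
base change `A` splits off two basis vectors on which `∂F` acts as the contractible block
`[[0,-1],[0,0]]`, leaving `∂D` on the middle two coordinates; a permutation of the basis then
puts `∂D` first.
-/

open MvPolynomial Matrix

namespace FlagDifferential

variable {R : Type*} [CommRing R]

section

variable (x y : R)

def flagDiff : Matrix (Fin 4) (Fin 4) R :=
  !![0, -y, -x, -1; 0, 0, 0, -x; 0, 0, 0, y; 0, 0, 0, 0]

def baseChange : Matrix (Fin 4) (Fin 4) R :=
  !![-1, 0, 0, 0; x, -1, 0, 0; y, 0, 1, 0; 0, -y, -x, -1]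

def baseChangeInv : Matrix (Fin 4) (Fin 4) R :=
  !![-1, 0, 0, 0; -x, -1, 0, 0; y, 0, 1, 0; 0, y, -x, -1]

theorem flagDiff_mul_self : flagDiff x y * flagDiff x y = 0 := by
  ext i j
  fin_cases i <;> fin_cases j <;> simp [flagDiff, mul_apply, Fin.sum_univ_four, mul_comm]

theorem baseChange_mul_baseChangeInv : baseChange x y * baseChangeInv x y = 1 := by
  ext i j
  fin_cases i <;> fin_cases j <;> simp [baseChange, baseChangeInv, mul_apply, Fin.sum_univ_four, mul_comm]

theorem baseChange_mul_flagDiff_mul_baseChangeInv :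
    baseChange x y * flagDiff x y * baseChangeInv x y =
      !![0, 0, 0, -1; 0, x * y, -x ^ 2, 0; 0, y ^ 2, -(x * y), 0; 0, 0, 0, 0] := by
  ext i j
  fin_cases i <;> fin_cases j <;>
    simp [baseChange, baseChangeInv, flagDiff, mul_apply, Fin.sum_univ_four] <;> ring

end

variable (R) in
def blockSwap : Matrix (Fin 4) (Fin 4) R :=
  !![0, 1, 0, 0; 0, 0, 1, 0; 1, 0, 0, 0; 0, 0, 0, 1]

theorem blockSwap_mul_transpose : blockSwap R * (blockSwap R)ᵀ = 1 := by
  ext i j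
  fin_cases i <;> fin_cases j <;> simp [blockSwap, mul_apply, Fin.sum_univ_four]

theorem blockSwap_conj (a b c d : R) :
    blockSwap R * !![0, 0, 0, -1; 0, a, b, 0; 0, c, d, 0; 0, 0, 0, 0] * (blockSwap R)ᵀ =
      !![a, b, 0, 0; c, d, 0, 0; 0, 0, 0, -1; 0, 0, 0, 0] := by
  ext i j
  fin_cases i <;> fin_cases j <;> simp [blockSwap, mul_apply, Fin.sum_univ_four]

end FlagDifferential

open FlagDifferential in
/-- Over `R = ℚ[x,y]`: the flag differential `∂F` on `R⁴` squares to zero; conjugating it by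
the invertible matrix `A` yields the displayed block matrix; consequently `(R⁴, ∂F)` is
isomorphic, as a differential module, to the direct sum of `(R², ∂D)` (with
`∂D = [[xy, -x²],[y², -xy]]`) and a contractible rank-2 differential module
(differential `[[0,-1],[0,0]]`). -/
theorem stmt7 :
    let R := MvPolynomial (Fin 2) ℚ
    let x : R := X 0
    let y : R := X 1
    let delF : Matrix (Fin 4) (Fin 4) R :=
      !![0, -y, -x, -1; 0, 0, 0, -x; 0, 0, 0, y; 0, 0, 0, 0]
    let A : Matrix (Fin 4) (Fin 4) R :=
      !![-1, 0, 0, 0; x, -1, 0, 0; y, 0, 1, 0; 0, -y, -x, -1]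
    delF * delF = 0 ∧ IsUnit A ∧
    A * delF * A⁻¹ = !![0, 0, 0, -1; 0, x * y, -x ^ 2, 0; 0, y ^ 2, -(x * y), 0; 0, 0, 0, 0] ∧
    ∃ P : Matrix (Fin 4) (Fin 4) R, IsUnit P ∧
      P * delF * P⁻¹ =
        !![x * y, -x ^ 2, 0, 0; y ^ 2, -(x * y), 0, 0; 0, 0, 0, -1; 0, 0, 0, 0] := by
  intro R x y delF A
  have hA : A * baseChangeInv x y = 1 := baseChange_mul_baseChangeInv x y
  have hσ := blockSwap_mul_transpose (R := R)
  have hconj : A * delF * A⁻¹ =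
      !![0, 0, 0, -1; 0, x * y, -x ^ 2, 0; 0, y ^ 2, -(x * y), 0; 0, 0, 0, 0] := by
    rw [inv_eq_right_inv hA]
    exact baseChange_mul_flagDiff_mul_baseChangeInv x y
  refine ⟨flagDiff_mul_self x y, .of_mul_eq_one _ hA, hconj, blockSwap R * A,
    (IsUnit.of_mul_eq_one _ hσ).mul (.of_mul_eq_one _ hA), ?_⟩
  calc blockSwap R * A * delF * (blockSwap R * A)⁻¹
      = blockSwap R * (A * delF * A⁻¹) * (blockSwap R)ᵀ := by
        rw [Matrix.mul_inv_rev, inv_eq_right_inv hσ]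
        simp only [Matrix.mul_assoc]
    _ = _ := by rw [hconj]; exact blockSwap_conj _ _ _ _
end

section
/- Let (R, 𝔪) be a Noetherian local ring and (F, ∂) a differential module where F is a finitely generated free R-module. Then F decomposes as a direct sum of differential modules F ≅ M ⊕ T, where the differential on M is minimal (maps M into 𝔪M) and T is contractible. -/
/-!
Modulo `𝔪`, a square-zero endomorphism of a vector space has a basis `cᵢ, ∂cᵢ, xⱼ` with
`∂xⱼ = 0`; by Nakayama any lift of it is a basis of `F`, now with `∂xⱼ ∈ 𝔪F`. Sending
`∂cᵢ ↦ cᵢ` and the other basis vectors to `0` defines `h` with `h² = 0`, `h∂h = h` and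
`∂ ≡ ∂h∂ mod 𝔪`. Then `e = ∂h + h∂` is an idempotent commuting with `∂`, so
`F = ker e ⊕ im e` as differential modules; `h` contracts `im e`, and on `ker e` the differential
equals `∂ - ∂h∂`, so it lands in `𝔪F ∩ ker e = 𝔪 • ker e`.
-/

open Module IsLocalRing TensorProduct

universe u v

theorem Basis.sumExtend_apply_inl {K V ι : Type*} [DivisionRing K] [AddCommGroup V] [Module K V]
    {v : ι → V} (hs : LinearIndependent K v) (i : ι) : Basis.sumExtend hs (.inl i) = v i := by
  rw [Basis.sumExtend, Basis.reindex_apply, Basis.extend_apply_self]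
  rfl

theorem Module.End.exists_basis_of_mul_self_eq_zero {k : Type*} {V : Type u} [Field k]
    [AddCommGroup V] [Module k V] (φ : Module.End k V) (hφ : φ * φ = 0) :
    ∃ (ι κ : Type u) (b : Basis (ι ⊕ ι ⊕ κ) k V),
      (∀ i, b (.inr (.inl i)) = φ (b (.inl i))) ∧ ∀ j, φ (b (.inr (.inr j))) = 0 := by
  obtain ⟨C, hC⟩ := (LinearMap.ker φ).exists_isCompl
  let bC := Basis.ofVectorSpace k C
  let ψ : C →ₗ[k] LinearMap.ker φ :=
    (φ.codRestrict _ fun y => by simp [← Module.End.mul_apply, hφ]) ∘ₗ C.subtype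
  have hψ : LinearIndependent k (ψ ∘ bC) := by
    refine bC.linearIndependent.map' ψ (LinearMap.ker_eq_bot'.mpr fun y hy => ?_)
    have hy' : (y : V) ∈ LinearMap.ker φ := by simpa [ψ, Subtype.ext_iff] using hy
    simpa using Submodule.disjoint_def.mp hC.disjoint y hy' y.2
  refine ⟨_, _, (bC.prod (.sumExtend hψ)).map (C.prodEquivOfIsCompl _ hC.symm), fun i => ?_,
    fun j => ?_⟩
  · simp only [Basis.map_apply, Basis.prod_apply, Sum.elim_inl, Sum.elim_inr,
      Function.comp_apply, Basis.sumExtend_apply_inl]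
    simp [ψ]
  · simp

theorem TensorProduct.one_tmul_eq_zero_iff_mem_smul_top {R M : Type*} [CommRing R]
    [AddCommGroup M] [Module R M] (I : Ideal R) (x : M) :
    (1 : R ⧸ I) ⊗ₜ[R] x = 0 ↔ x ∈ I • (⊤ : Submodule R M) := by
  rw [← (quotTensorEquivQuotSMul M I).map_eq_zero_iff, quotTensorEquivQuotSMul_mk_one_tmul,
    Submodule.Quotient.mk_eq_zero]

theorem Module.End.exists_basis_of_mul_self_eq_zero_of_isLocalRing {R : Type u} {F : Type v}
    [CommRing R] [IsLocalRing R] [AddCommGroup F] [Module R F] [Module.Free R F] [Module.Finite R F]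
    (d : Module.End R F) (hd : d * d = 0) :
    ∃ (ι κ : Type (max u v)) (B : Basis (ι ⊕ ι ⊕ κ) R F),
      (∀ i, B (.inr (.inl i)) = d (B (.inl i))) ∧
        ∀ j, d (B (.inr (.inr j))) ∈ maximalIdeal R • (⊤ : Submodule R F) := by
  have := Module.finitePresentation_of_projective R F
  have hφ : d.baseChange (ResidueField R) * d.baseChange (ResidueField R) = 0 := by
    rw [← LinearMap.baseChange_mul, hd, LinearMap.baseChange_zero]
  obtain ⟨ι, κ, b, hbφ, hbker⟩ := Module.End.exists_basis_of_mul_self_eq_zero _ hφ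
  have hsurj := TensorProduct.mk_surjective R F (ResidueField R) residue_surjective
  choose c hc using fun i => hsurj (b (.inl i))
  choose x hx using fun j => hsurj (b (.inr (.inr j)))
  set v : ι ⊕ ι ⊕ κ → F := Sum.elim c (Sum.elim (d ∘ c) x)
  have hv : TensorProduct.mk R (ResidueField R) F 1 ∘ v = b := by
    ext (i | i | j)
    · exact hc i
    · simp [v, hbφ, ← hc i]
    · exact hx j
  obtain ⟨B, hB⟩ := exists_basis_of_basis_baseChange v (hv ▸ b.linearIndependent) (hv ▸ b.span_eq)
    (Module.Flat.rTensor_preserves_injective_linearMap _ Subtype.val_injective)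
  refine ⟨ι, κ, B, fun i => by simp [hB, v], fun j => ?_⟩
  rw [hB, ← one_tmul_eq_zero_iff_mem_smul_top]
  have h0 := hbker j
  simp only [← hx j, mk_apply, LinearMap.baseChange_tmul] at h0
  exact h0

theorem Submodule.smul_top_inf_eq_smul_of_isCompl {R M : Type*} [CommRing R]
    [AddCommGroup M] [Module R M] (I : Ideal R) {p q : Submodule R M} (h : IsCompl p q) :
    I • ⊤ ⊓ p = I • p := by
  calc I • ⊤ ⊓ p = (I • p ⊔ I • q) ⊓ p := by rw [← smul_sup, h.sup_eq_top]
    _ = I • p ⊔ I • q ⊓ p := sup_inf_assoc_of_le _ smul_le_right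
    _ = I • p := by
      rw [(h.disjoint.symm.mono_left smul_le_right).eq_bot, sup_bot_eq]

section Homotopy

variable {R F : Type*} [CommRing R] [AddCommGroup F] [Module R F] {d h : Module.End R F}

theorem Module.End.exists_homotopy_of_basis {ι κ : Type*} (I : Ideal R) (hd : d * d = 0)
    (B : Basis (ι ⊕ ι ⊕ κ) R F) (hB : ∀ i, B (.inr (.inl i)) = d (B (.inl i)))
    (hBI : ∀ j, d (B (.inr (.inr j))) ∈ I • (⊤ : Submodule R F)) :
    ∃ h : Module.End R F, h * h = 0 ∧ h * d * h = h ∧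
      ∀ x, (d - d * h * d) x ∈ I • (⊤ : Submodule R F) := by
  set h : Module.End R F := B.constr R (Sum.elim 0 (Sum.elim (B ∘ .inl) 0))
  have h_inl : ∀ i, h (B (.inl i)) = 0 := fun i => by simp [h]
  have h_inr_inl : ∀ i, h (d (B (.inl i))) = B (.inl i) := fun i => by simp [h, ← hB]
  have h_inr_inr : ∀ j, h (B (.inr (.inr j))) = 0 := fun j => by simp [h]
  have hdB : ∀ i, d (d (B (.inl i))) = 0 := fun i => by simp [← Module.End.mul_apply, hd]
  refine ⟨h, B.ext ?_, B.ext ?_, fun x => ?_⟩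
  iterate 2 rintro (i | i | j) <;> simp [h_inl, h_inr_inl, h_inr_inr, hB]
  · have hstable (f : Module.End R F) := Submodule.smul_top_le_comap_smul_top I f
    suffices Submodule.span R (Set.range B) ≤ (I • ⊤ : Submodule R F).comap (d - d * h * d) from
      this (B.mem_span x)
    rw [Submodule.span_le]
    rintro _ ⟨i | i | j, rfl⟩
    · simp [h_inr_inl]
    · simp [hB, hdB]
    · exact sub_mem (hBI j) (hstable (d * h) (hBI j))

theorem Module.End.isIdempotentElem_mul_add_mul (hd : d * d = 0) (hh : h * h = 0)
    (hhdh : h * d * h = h) : IsIdempotentElem (d * h + h * d) := by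
  calc (d * h + h * d) * (d * h + h * d)
      = d * (h * d * h) + d * (h * h) * d + h * (d * d) * h + h * d * h * d := by noncomm_ring
    _ = d * h + h * d := by simp [hhdh, hh, hd]

theorem Module.End.commute_mul_add_mul (hd : d * d = 0) : Commute d (d * h + h * d) := by
  calc d * (d * h + h * d) = (d * d) * h + d * h * d := by noncomm_ring
    _ = d * h * d + h * (d * d) := by simp [hd]
    _ = (d * h + h * d) * d := by noncomm_ring

theorem Module.End.exists_minimal_contractible_decomposition (I : Ideal R) (hd : d * d = 0)
    (hh : h * h = 0) (hhdh : h * d * h = h)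
    (hmin : ∀ x, (d - d * h * d) x ∈ I • (⊤ : Submodule R F)) :
    ∃ M T : Submodule R F, IsCompl M T ∧ (∀ x ∈ M, d x ∈ M) ∧ (∀ x ∈ T, d x ∈ T) ∧
      (∀ x ∈ M, d x ∈ I • M) ∧ (∀ x ∈ T, h x ∈ T) ∧ ∀ x ∈ T, h (d x) + d (h x) = x := by
  set e := d * h + h * d
  have he : IsIdempotentElem e := isIdempotentElem_mul_add_mul hd hh hhdh
  obtain ⟨hT, hM⟩ := (LinearMap.IsIdempotentElem.commute_iff he).mp (commute_mul_add_mul hd).symm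
  rw [Module.End.mem_invtSubmodule] at hT hM
  have hdhd : d * h * d = d * e := by simp [e, mul_add, ← mul_assoc, hd]
  have hhe : h * e = h := by simp [e, mul_add, ← mul_assoc, hh, hhdh]
  have heh : e * h = h := by simp [e, add_mul, mul_assoc, hh, hhdh]
  have hcompl := (LinearMap.IsIdempotentElem.isCompl he).symm
  refine ⟨LinearMap.ker e, LinearMap.range e, hcompl, hM, hT, fun z hz => ?_, ?_, ?_⟩
  · rw [← Submodule.smul_top_inf_eq_smul_of_isCompl I hcompl]
    refine ⟨?_, hM hz⟩
    simpa [hdhd, LinearMap.mem_ker.mp hz] using hmin z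
  · rintro _ ⟨y, rfl⟩
    exact ⟨h y, by rw [← Module.End.mul_apply, ← Module.End.mul_apply, heh, hhe]⟩
  · rintro _ ⟨y, rfl⟩
    calc h (d (e y)) + d (h (e y)) = e (e y) := add_comm _ _
      _ = e y := congr($he y)

end Homotopy

theorem stmt11_general {R F : Type*} [CommRing R] [IsLocalRing R]
    [AddCommGroup F] [Module R F] [Module.Free R F] [Module.Finite R F]
    (del : F →ₗ[R] F) (hsq : del ∘ₗ del = 0) :
    ∃ M T : Submodule R F,
      IsCompl M T ∧
      (∀ x ∈ M, del x ∈ M) ∧ (∀ x ∈ T, del x ∈ T) ∧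
      (∀ x ∈ M, del x ∈ (IsLocalRing.maximalIdeal R) • M) ∧
      (∃ h : F →ₗ[R] F, (∀ x ∈ T, h x ∈ T) ∧ ∀ x ∈ T, h (del x) + del (h x) = x) := by
  obtain ⟨ι, κ, B, hB, hBm⟩ := Module.End.exists_basis_of_mul_self_eq_zero_of_isLocalRing del hsq
  obtain ⟨h, hh, hhdh, hdh⟩ := Module.End.exists_homotopy_of_basis _ hsq B hB hBm
  obtain ⟨M, T, hMT, hM, hT, hMmin, hhT, hcontr⟩ :=
    Module.End.exists_minimal_contractible_decomposition _ hsq hh hhdh hdh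
  exact ⟨M, T, hMT, hM, hT, hMmin, h, hhT, hcontr⟩

/-- Minimization: over a Noetherian local ring `(R, 𝔪)`, a finitely generated free
differential module `(F, ∂)` decomposes as a direct sum of differential modules `M ⊕ T`
where the differential on `M` is minimal (lands in `𝔪M`) and `T` is contractible. -/
theorem stmt11 {R F : Type*} [CommRing R] [IsNoetherianRing R] [IsLocalRing R]
    [AddCommGroup F] [Module R F] [Module.Free R F] [Module.Finite R F]
    (del : F →ₗ[R] F) (hsq : del ∘ₗ del = 0) :
    ∃ M T : Submodule R F,
      IsCompl M T ∧
      (∀ x ∈ M, del x ∈ M) ∧ (∀ x ∈ T, del x ∈ T) ∧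
      (∀ x ∈ M, del x ∈ (IsLocalRing.maximalIdeal R) • M) ∧
      (∃ h : F →ₗ[R] F, (∀ x ∈ T, h x ∈ T) ∧ ∀ x ∈ T, h (del x) + del (h x) = x) :=
  stmt11_general del hsq
end

section
/- Let R = k[x]/(x²) with deg(x) = 1, let a be an integer, and let D = R(-a) ⊕ R(-1) be the degree-a differential module with differential given by the matrix [[0, x], [0, 0]]. Then the homology of D is isomorphic to k(-a) ⊕ k(-2) as a graded module, which has infinite projective dimension over R, while D itself is a finitely generated free differential module with minimal differential. -/
open CategoryTheory

/-!
In `R = k[X]/(X²)` the class `x` of `X` satisfies `x² = 0` and `ann x = (x)`. The cycles of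
`d (r, s) = (x s, 0)` are `R × ann x = R × x R` and the boundaries are `x R × 0`, so
`(u, v) ↦ [(u, x v)]` identifies the homology with `R/(x) × R/(x)`.

For a projective resolution `P → R/(x)`, projectivity gives `ann x = x • Pᵢ` in every `Pᵢ`.
Starting from a lift `p₀` of `1`, exactness produces `pᵢ₊₁` with `d pᵢ₊₁ = x • pᵢ`, and
`pᵢ ∉ range d + x • Pᵢ` propagates: `pᵢ₊₁ = d a + x • b` would give `x • (pᵢ - d b) = 0`,
hence `pᵢ - d b ∈ x • Pᵢ`. So every `pᵢ` is nonzero and no `Pᵢ` vanishes.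
-/

abbrev LinearMap.differentialHomology {R M : Type*} [CommRing R] [AddCommGroup M] [Module R M]
    (d : M →ₗ[R] M) : Type _ :=
  LinearMap.ker d ⧸ (LinearMap.range d).comap (LinearMap.ker d).subtype

section SquareZeroDifferential

variable {R : Type*} [CommRing R]

/-- The differential on `R × R` with matrix `[[0, x], [0, 0]]`. -/
def offDiagMul (x : R) : R × R →ₗ[R] R × R :=
  LinearMap.inl R R R ∘ₗ LinearMap.mulLeft R x ∘ₗ LinearMap.snd R R R

@[simp]
theorem offDiagMul_apply (x : R) (p : R × R) : offDiagMul x p = (x * p.2, 0) := rfl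

theorem offDiagMul_comp_self (x : R) : offDiagMul x ∘ₗ offDiagMul x = 0 := by
  ext <;> simp

theorem offDiagMul_apply_mem_span (x : R) (p : R × R) :
    (offDiagMul x p).1 ∈ Ideal.span {x} ∧ (offDiagMul x p).2 ∈ Ideal.span {x} :=
  ⟨Ideal.mem_span_singleton.mpr (dvd_mul_right x p.2), Submodule.zero_mem _⟩

theorem mem_ker_offDiagMul {x : R} {p : R × R} :
    p ∈ LinearMap.ker (offDiagMul x) ↔ x * p.2 = 0 := by
  simp [Prod.ext_iff]

theorem mem_range_offDiagMul {x : R} {p : R × R} :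
    p ∈ LinearMap.range (offDiagMul x) ↔ x ∣ p.1 ∧ p.2 = 0 := by
  constructor
  · rintro ⟨q, rfl⟩
    exact ⟨dvd_mul_right x q.2, rfl⟩
  · rintro ⟨⟨s, hs⟩, h2⟩
    exact ⟨(0, s), Prod.ext hs.symm h2.symm⟩

theorem nonempty_offDiagMul_homology_equiv {x : R} (hxx : x * x = 0)
    (hann : ∀ c : R, x * c = 0 → x ∣ c) :
    Nonempty ((offDiagMul x).differentialHomology ≃ₗ[R]
      (R ⧸ Ideal.span {x}) × (R ⧸ Ideal.span {x})) := by
  let toCycles : R × R →ₗ[R] LinearMap.ker (offDiagMul x) :=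
    LinearMap.codRestrict _ (LinearMap.prodMap LinearMap.id (LinearMap.mulLeft R x))
      fun p => mem_ker_offDiagMul.mpr (by simp [← mul_assoc, hxx])
  let f : R × R →ₗ[R] (offDiagMul x).differentialHomology := Submodule.mkQ _ ∘ₗ toCycles
  let g := (Ideal.span {x}).mkQ.prodMap (Ideal.span {x}).mkQ
  have hf : Function.Surjective f := by
    rintro ⟨⟨⟨r, s⟩, hrs⟩⟩
    obtain ⟨t, rfl⟩ := hann s (mem_ker_offDiagMul.mp hrs)
    exact ⟨(r, t), rfl⟩
  have hg : Function.Surjective g :=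
    Prod.map_surjective.mpr ⟨Submodule.mkQ_surjective _, Submodule.mkQ_surjective _⟩
  have hker : LinearMap.ker f = LinearMap.ker g := by
    ext ⟨u, v⟩
    simp only [f, g, toCycles, LinearMap.mem_ker, LinearMap.comp_apply, Submodule.mkQ_apply,
      Submodule.Quotient.mk_eq_zero, Submodule.mem_comap, Submodule.subtype_apply,
      LinearMap.codRestrict_apply, LinearMap.prodMap_apply, mem_range_offDiagMul,
      Prod.mk_eq_zero, Ideal.mem_span_singleton, LinearMap.id_apply, LinearMap.mulLeft_apply]
    exact and_congr_right fun _ =>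
      ⟨hann v, fun ⟨w, hw⟩ => by rw [hw, ← mul_assoc, hxx, zero_mul]⟩
  exact ⟨(f.quotKerEquivOfSurjective hf).symm ≪≫ₗ Submodule.quotEquivOfEq _ _ hker ≪≫ₗ
    g.quotKerEquivOfSurjective hg⟩

end SquareZeroDifferential

section InfiniteProjectiveDimension

variable {R : Type*} [CommRing R] {x : R}

theorem Module.Projective.exists_eq_smul_of_smul_eq_zero (hann : ∀ c : R, x * c = 0 → x ∣ c)
    {M : Type*} [AddCommGroup M] [Module R M] [Module.Projective R M] {m : M}
    (hm : x • m = 0) : ∃ m', m = x • m' := by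
  -- split `M` off the free module on `M` and argue coordinatewise
  obtain ⟨s, hs⟩ := Module.projective_def.mp ‹Module.Projective R M›
  have hsm : ∀ a, x * s m a = 0 := fun a => by
    simpa using congrArg (· a) (show x • s m = 0 by rw [← map_smul, hm, map_zero])
  choose d hd using fun a => hann _ (hsm a)
  refine ⟨∑ a ∈ (s m).support, d a • a, ?_⟩
  conv_lhs => rw [← hs m]
  rw [Finsupp.linearCombination_apply, Finsupp.sum, Finset.smul_sum]
  exact Finset.sum_congr rfl fun a _ => by rw [smul_smul, ← hd a, id]

/-- The image of `p` in `coker g` is killed by `x` but does not lie in `x • coker g`. -/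
def SmulCokerWitness (x : R) {B C : Type*} [AddCommGroup B] [Module R B] [AddCommGroup C]
    [Module R C] (g : B →ₗ[R] C) (p : C) : Prop :=
  (∃ u, g u = x • p) ∧ ∀ b c, p ≠ g b + x • c

variable {A B C M : Type*} [AddCommGroup A] [Module R A] [AddCommGroup B] [Module R B]
  [AddCommGroup C] [Module R C] [AddCommGroup M] [Module R M]

theorem SmulCokerWitness.ne_zero {g : B →ₗ[R] C} {p : C} (hp : SmulCokerWitness x g p) :
    p ≠ 0 := by
  simpa using hp.2 0 0

theorem Function.Exact.exists_smulCokerWitness_of_surjective {g : B →ₗ[R] C} {ε : C →ₗ[R] M}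
    (hgε : Function.Exact g ε) (hε : Function.Surjective ε) (hxM : ∀ m : M, x • m = 0)
    {m : M} (hm : m ≠ 0) : ∃ p, SmulCokerWitness x g p := by
  obtain ⟨p, rfl⟩ := hε m
  refine ⟨p, (hgε _).mp (by rw [map_smul, hxM]), fun b c hbc => hm ?_⟩
  rw [hbc, map_add, map_smul, hgε.apply_apply_eq_zero, hxM, add_zero]

theorem Function.Exact.exists_smulCokerWitness (hxx : x * x = 0)
    (hannC : ∀ c : C, x • c = 0 → ∃ c', c = x • c') {h : A →ₗ[R] B} {g : B →ₗ[R] C}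
    (hhg : Function.Exact h g) {p : C} (hp : SmulCokerWitness x g p) :
    ∃ u, SmulCokerWitness x h u := by
  obtain ⟨⟨u, hu⟩, hp⟩ := hp
  refine ⟨u, (hhg _).mp (by rw [map_smul, hu, smul_smul, hxx, zero_smul]), fun a b hab => ?_⟩
  have hxp : x • (p - g b) = 0 := by
    rw [smul_sub, ← hu, hab, map_add, hhg.apply_apply_eq_zero, map_smul, zero_add, sub_self]
  obtain ⟨c, hc⟩ := hannC _ hxp
  exact hp b c (by rw [← hc, add_sub_cancel])

end InfiniteProjectiveDimension

namespace CategoryTheory.ProjectiveResolution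

variable {R : Type*} [CommRing R] {x : R}

theorem exists_smulCokerWitness (hxx : x * x = 0) (hann : ∀ c : R, x * c = 0 → x ∣ c)
    (hx : ¬IsUnit x) (P : ProjectiveResolution (ModuleCat.of R (R ⧸ Ideal.span {x}))) (n : ℕ) :
    ∃ p, SmulCokerWitness x (P.complex.d (n + 1) n).hom p := by
  have hannP : ∀ i (c : P.complex.X i), x • c = 0 → ∃ c', c = x • c' := fun i _ hc =>
    have := (IsProjective.iff_projective _).mpr (P.projective i)
    Module.Projective.exists_eq_smul_of_smul_eq_zero hann hc
  induction n with
  | zero =>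
    have : Nontrivial (R ⧸ Ideal.span {x}) :=
      Ideal.Quotient.nontrivial_iff.mpr (mt Ideal.span_singleton_eq_top.mp hx)
    have hxM : ∀ m : R ⧸ Ideal.span {x}, x • m = 0 := fun m => by
      rw [Algebra.smul_def, Ideal.Quotient.algebraMap_eq, Ideal.Quotient.mk_singleton_self,
        zero_mul]
    have hε : Function.Exact (P.complex.d 1 0).hom (P.π.f 0).hom :=
      (ShortComplex.ShortExact.moduleCat_exact_iff_function_exact _).mp P.exact₀
    exact hε.exists_smulCokerWitness_of_surjective (M := R ⧸ Ideal.span {x})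
      ((ModuleCat.epi_iff_surjective _).mp inferInstance) hxM one_ne_zero
  | succ n ih =>
    obtain ⟨p, hp⟩ := ih
    exact ((ShortComplex.ShortExact.moduleCat_exact_iff_function_exact _).mp (P.exact_succ n)
      |>.exists_smulCokerWitness hxx (hannP n) hp)

theorem not_isZero_X (hxx : x * x = 0) (hann : ∀ c : R, x * c = 0 → x ∣ c) (hx : ¬IsUnit x)
    (P : ProjectiveResolution (ModuleCat.of R (R ⧸ Ideal.span {x}))) (n : ℕ) :
    ¬Limits.IsZero (P.complex.X n) := by
  obtain ⟨p, hp⟩ := P.exists_smulCokerWitness hxx hann hx n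
  rw [ModuleCat.isZero_iff_subsingleton, not_subsingleton_iff_nontrivial]
  exact ⟨p, 0, hp.ne_zero⟩

end CategoryTheory.ProjectiveResolution

namespace Polynomial

variable {k : Type*} [CommRing k]

local notation "xbar" => Ideal.Quotient.mk (Ideal.span {(X : k[X]) ^ 2}) X

theorem mk_X_mul_mk_X_eq_zero : xbar * xbar = (0 : k[X] ⧸ Ideal.span {(X : k[X]) ^ 2}) := by
  rw [← map_mul, ← sq, Ideal.Quotient.mk_singleton_self]

theorem mk_X_dvd_of_mk_X_mul_eq_zero {c : k[X] ⧸ Ideal.span {(X : k[X]) ^ 2}}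
    (hc : xbar * c = 0) : xbar ∣ c := by
  obtain ⟨p, rfl⟩ := Ideal.Quotient.mk_surjective c
  rw [← map_mul, Ideal.Quotient.eq_zero_iff_mem, Ideal.mem_span_singleton] at hc
  obtain ⟨q, hq⟩ := hc
  obtain rfl : p = X * q := isRegular_X.left (show X * p = X * (X * q) by rw [hq]; ring)
  exact ⟨Ideal.Quotient.mk _ q, map_mul _ _ _⟩

theorem not_isUnit_mk_X [Nontrivial k] : ¬IsUnit (xbar : k[X] ⧸ Ideal.span {(X : k[X]) ^ 2}) :=
  have : Nontrivial (k[X] ⧸ Ideal.span {(X : k[X]) ^ 2}) := Ideal.Quotient.nontrivial_iff.mpr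
    (mt Ideal.span_singleton_eq_top.mp ((isUnit_pow_iff two_ne_zero).not.mpr not_isUnit_X))
  IsNilpotent.not_isUnit ⟨2, (sq _).trans mk_X_mul_mk_X_eq_zero⟩

end Polynomial

theorem stmt17_general {k : Type} [Field k] :
    let R := Polynomial k ⧸ Ideal.span {(Polynomial.X : Polynomial k) ^ 2}
    let x : R := Ideal.Quotient.mk _ Polynomial.X
    let del : R × R →ₗ[R] R × R :=
      (LinearMap.inl R R R) ∘ₗ (LinearMap.mulLeft R x) ∘ₗ (LinearMap.snd R R R)
    del ∘ₗ del = 0 ∧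
    (∀ p : R × R, (del p).1 ∈ Ideal.span {x} ∧ (del p).2 ∈ Ideal.span {x}) ∧
    Nonempty ((LinearMap.ker del ⧸ (LinearMap.range del).comap (LinearMap.ker del).subtype)
      ≃ₗ[R] ((R ⧸ Ideal.span {x}) × (R ⧸ Ideal.span {x}))) ∧
    (∀ (P : ProjectiveResolution (ModuleCat.of R (R ⧸ Ideal.span {x}))) (N : ℕ),
      ∃ i, N ≤ i ∧ ¬ Limits.IsZero (P.complex.X i)) := by
  intro R x del
  have hxx : x * x = 0 := Polynomial.mk_X_mul_mk_X_eq_zero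
  have hann : ∀ c : R, x * c = 0 → x ∣ c := fun _ => Polynomial.mk_X_dvd_of_mk_X_mul_eq_zero
  exact ⟨offDiagMul_comp_self x, offDiagMul_apply_mem_span x,
    nonempty_offDiagMul_homology_equiv hxx hann,
    fun P N => ⟨N, le_rfl, P.not_isZero_X hxx hann Polynomial.not_isUnit_mk_X N⟩⟩

/-- Over `R = k[x]/(x²)`, the free differential module `D = R ⊕ R` with differential
`(r, s) ↦ (x·s, 0)` (the matrix `[[0, x], [0, 0]]`, of degree `a` after twisting) squares to
zero and is minimal, its homology is isomorphic to `k ⊕ k = R/(x) ⊕ R/(x)`, and `R/(x)` has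
infinite projective dimension over `R` (every projective resolution is nonzero in arbitrarily
high homological degrees). -/
theorem stmt17 {k : Type} [Field k] (a : ℤ) :
    let R := Polynomial k ⧸ Ideal.span {(Polynomial.X : Polynomial k) ^ 2}
    let x : R := Ideal.Quotient.mk _ Polynomial.X
    let del : R × R →ₗ[R] R × R :=
      (LinearMap.inl R R R) ∘ₗ (LinearMap.mulLeft R x) ∘ₗ (LinearMap.snd R R R)
    del ∘ₗ del = 0 ∧
    (∀ p : R × R, (del p).1 ∈ Ideal.span {x} ∧ (del p).2 ∈ Ideal.span {x}) ∧
    Nonempty ((LinearMap.ker del ⧸ (LinearMap.range del).comap (LinearMap.ker del).subtype)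
      ≃ₗ[R] ((R ⧸ Ideal.span {x}) × (R ⧸ Ideal.span {x}))) ∧
    (∀ (P : ProjectiveResolution (ModuleCat.of R (R ⧸ Ideal.span {x}))) (N : ℕ),
      ∃ i, N ≤ i ∧ ¬ Limits.IsZero (P.complex.X i)) :=
  stmt17_general
end
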